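/- arXiv:0705.0170 — 2 statements merged into one kernel-verified Lean document; each statement's English description precedes it below -/
import Mathlib

section
/- Let n ≥ 2 and let A = 2^{1/n}·M, where M is the real n×n matrix with M_{ii} = 1 for 1 ≤ i ≤ n−1, M_{in} = 1/2 for 1 ≤ i ≤ n, and all other entries 0. Then for every nonzero integer vector v ∈ ℤⁿ whose last coordinate vₙ is even, one has ‖Av‖ ≥ 2^{1/n}, with equality for v = e₁. -/
/-- The Euclidean norm of a vector in `ℝⁿ`. -/
noncomputable def eNorm {n : ℕ} (x : Fin n → ℝ) : ℝ :=
  Real.sqrt (∑ i, (x i) ^ 2)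

/-- The Euclidean norm of `A v` for an integer vector `v`. -/
noncomputable def latNorm {n : ℕ} (A : Matrix (Fin n) (Fin n) ℝ) (v : Fin n → ℤ) : ℝ :=
  eNorm (A.mulVec (fun i => (v i : ℝ)))

/-- The systole of `A`: the infimum (in fact minimum) of `‖A v‖` over nonzero
integer vectors `v ∈ ℤⁿ`. -/
noncomputable def syst {n : ℕ} (A : Matrix (Fin n) (Fin n) ℝ) : ℝ :=
  sInf {r | ∃ v : Fin n → ℤ, v ≠ 0 ∧ r = latNorm A v}

/-- The matrix `M` with `M i i = 1` for `i` in the upper-left `(n-1) × (n-1)` block,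
last column constantly `1/2`, and all other entries `0`. -/
noncomputable def Mmat (n : ℕ) : Matrix (Fin n) (Fin n) ℝ :=
  Matrix.of fun i j => if (j : ℕ) = n - 1 then 1 / 2 else if i = j then 1 else 0

/-- The matrix `A = 2^(1/n) • M` (which has determinant `1`). -/
noncomputable def Amat (n : ℕ) : Matrix (Fin n) (Fin n) ℝ :=
  ((2 : ℝ) ^ ((1 : ℝ) / n)) • Mmat n

/-!
When `vₙ = 2k`, the vector `M v = (v₁ + k, …, v_{n-1} + k, k)` is again an integer vector, and it
is nonzero because `v` can be recovered from it. A nonzero integer vector has norm at least `1`, so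
`‖A v‖ = 2^{1/n} ‖M v‖ ≥ 2^{1/n}`. For `n ≥ 2` the last coordinate of `e₁`
vanishes, so `M e₁ = e₁`.
-/

open Matrix

lemma eNorm_smul {n : ℕ} (c : ℝ) (x : Fin n → ℝ) : eNorm (c • x) = |c| * eNorm x := by
  simp only [eNorm, Pi.smul_apply, smul_eq_mul, mul_pow, ← Finset.mul_sum]
  rw [Real.sqrt_mul (sq_nonneg c), Real.sqrt_sq_eq_abs]

lemma one_le_eNorm_intCast {n : ℕ} {u : Fin n → ℤ} (hu : u ≠ 0) :
    1 ≤ eNorm (fun i => (u i : ℝ)) := by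
  obtain ⟨i, hi⟩ := Function.ne_iff.mp hu
  rw [eNorm, Real.one_le_sqrt]
  calc (1 : ℝ) ≤ (u i : ℝ) ^ 2 :=
      mod_cast (one_le_sq_iff_one_le_abs _).mpr (Int.one_le_abs hi)
    _ ≤ ∑ j, (u j : ℝ) ^ 2 :=
      Finset.single_le_sum (fun j _ => sq_nonneg (u j : ℝ)) (Finset.mem_univ i)

lemma latNorm_smul {n : ℕ} (c : ℝ) (M : Matrix (Fin n) (Fin n) ℝ) (v : Fin n → ℤ) :
    latNorm (c • M) v = |c| * latNorm M v := by
  rw [latNorm, smul_mulVec, eNorm_smul, latNorm]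

lemma Mmat_mulVec_apply {n : ℕ} (hn : 0 < n) (w : Fin n → ℝ) (i : Fin n) :
    (Mmat n *ᵥ w) i = (if (i : ℕ) = n - 1 then 0 else w i) + w ⟨n - 1, by omega⟩ / 2 := by
  set last : Fin n := ⟨n - 1, by omega⟩
  have hlast (j : Fin n) : (j : ℕ) = n - 1 ↔ j = last := by rw [Fin.ext_iff]
  simp only [mulVec, dotProduct, Mmat, of_apply, hlast]
  by_cases hi : i = last
  · rw [Fintype.sum_eq_single last fun j hj => by simp [hj, hi, Ne.symm]]
    simp [hi, div_eq_inv_mul]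
  · rw [Fintype.sum_eq_add i last hi fun j hj => by simp [hj.2, Ne.symm hj.1]]
    simp [hi, div_eq_inv_mul]

lemma Mmat_mulVec_intCast_of_last_eq {n : ℕ} (hn : 0 < n) {v : Fin n → ℤ} {k : ℤ}
    (hk : v ⟨n - 1, by omega⟩ = k + k) :
    Mmat n *ᵥ (fun i => (v i : ℝ)) =
      fun i : Fin n => (((if (i : ℕ) = n - 1 then 0 else v i) + k : ℤ) : ℝ) := by
  ext i
  rw [Mmat_mulVec_apply hn, hk]
  push_cast
  split_ifs <;> ring

lemma one_le_eNorm_Mmat_mulVec_of_even {n : ℕ} (hn : 0 < n) {v : Fin n → ℤ} (hv : v ≠ 0)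
    (heven : Even (v ⟨n - 1, by omega⟩)) : 1 ≤ eNorm (Mmat n *ᵥ fun i => (v i : ℝ)) := by
  obtain ⟨k, hk⟩ := heven
  rw [Mmat_mulVec_intCast_of_last_eq hn hk]
  refine one_le_eNorm_intCast fun hu => hv ?_
  have hk0 : k = 0 := by simpa using congrFun hu ⟨n - 1, by omega⟩
  ext i
  by_cases hi : (i : ℕ) = n - 1
  · rw [show i = ⟨n - 1, by omega⟩ from Fin.ext hi, hk, hk0]; rfl
  · simpa [hi, hk0] using congrFun hu i

lemma Mmat_mulVec_basis_zero {n : ℕ} (hn : 2 ≤ n) :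
    Mmat n *ᵥ (fun i : Fin n => if (i : ℕ) = 0 then (1 : ℝ) else 0) =
      fun i : Fin n => if (i : ℕ) = 0 then 1 else 0 := by
  ext i
  rw [Mmat_mulVec_apply (by omega)]
  split_ifs <;> simp_all <;> omega

lemma eNorm_basis_zero {n : ℕ} (hn : 0 < n) :
    eNorm (fun i : Fin n => if (i : ℕ) = 0 then (1 : ℝ) else 0) = 1 := by
  simp [eNorm, apply_ite (· ^ 2), ← Fin.ext_iff (b := ⟨0, hn⟩)]

/-- For `A = 2^(1/n) • M`, every nonzero integer vector whose last coordinate is even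
satisfies `‖A v‖ ≥ 2^(1/n)`, with equality for `v = e₁`. -/
theorem norm_ge_of_even_last {n : ℕ} (hn : 2 ≤ n) :
    (∀ v : Fin n → ℤ, v ≠ 0 → Even (v ⟨n - 1, by omega⟩) →
      (2 : ℝ) ^ ((1 : ℝ) / n) ≤ latNorm (Amat n) v) ∧
    latNorm (Amat n) (fun i => if (i : ℕ) = 0 then 1 else 0) = (2 : ℝ) ^ ((1 : ℝ) / n) := by
  have hc : (0 : ℝ) ≤ 2 ^ ((1 : ℝ) / n) := by positivity
  simp only [Amat, latNorm_smul, abs_of_nonneg hc]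
  refine ⟨fun v hv heven => ?_, ?_⟩
  · exact le_mul_of_one_le_right hc (one_le_eNorm_Mmat_mulVec_of_even (by omega) hv heven)
  · rw [latNorm]
    push_cast
    rw [Mmat_mulVec_basis_zero hn, eNorm_basis_zero (by omega), mul_one]
end

section
/- Let n ≥ 5, let A = 2^{1/n}·M with M the real n×n matrix with M_{ii} = 1 for 1 ≤ i ≤ n−1, M_{in} = 1/2 for 1 ≤ i ≤ n, and all other entries 0, and let H be a real n×n diagonal matrix with positive diagonal entries a₁,…,aₙ. If the set S(HA) of shortest integer vectors of HA generates a finite-index subgroup of ℤⁿ, then syst(HA) = 2^{1/n}·aₙ. -/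
/-!
With `b = 2^(1/n) a` we have `H A = diag b · M`, and `‖H A v‖² = ∑_{i<n} bᵢ² (vᵢ + vₙ/2)² + bₙ² (vₙ/2)²`.
The vectors `eᵢ` (`i < n`) and `(-1, …, -1, 2)` show `syst ≤ bᵢ` for every `i`. As the shortest
vectors span a finite-index subgroup, one of them, `v`, has `vₙ ≠ 0`. If `vₙ` were odd, every
`2vᵢ + vₙ` would be odd, so `‖H A v‖² ≥ ∑ bᵢ²/4 > (n-1)/4 · syst² ≥ syst²` because `n ≥ 5`, which is
absurd. Hence `vₙ` is even and `syst = ‖H A v‖ ≥ bₙ`.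
-/

open Matrix

section Systole

variable {n : ℕ} (A : Matrix (Fin n) (Fin n) ℝ)

lemma latNorm_nonneg (v : Fin n → ℤ) : 0 ≤ latNorm A v :=
  Real.sqrt_nonneg _

lemma latNorm_sq (v : Fin n → ℤ) :
    latNorm A v ^ 2 = ∑ i, (A *ᵥ fun j => (v j : ℝ)) i ^ 2 :=
  Real.sq_sqrt (Finset.sum_nonneg fun _ _ => sq_nonneg _)

lemma syst_nonneg : 0 ≤ syst A :=
  Real.sInf_nonneg <| by rintro r ⟨v, -, rfl⟩; exact latNorm_nonneg A v

lemma syst_le_latNorm {v : Fin n → ℤ} (hv : v ≠ 0) : syst A ≤ latNorm A v :=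
  csInf_le ⟨0, by rintro r ⟨w, -, rfl⟩; exact latNorm_nonneg A w⟩ ⟨v, hv, rfl⟩

lemma syst_le_of_latNorm_sq_le {v : Fin n → ℤ} (hv : v ≠ 0) {r : ℝ} (hr : 0 ≤ r)
    (h : latNorm A v ^ 2 ≤ r ^ 2) : syst A ≤ r :=
  (syst_le_latNorm A hv).trans (le_of_sq_le_sq h hr)

end Systole

lemma AddSubgroup.exists_mem_apply_ne_zero_of_index_closure_ne_zero {ι : Type*} [DecidableEq ι]
    {S : Set (ι → ℤ)} (hS : (AddSubgroup.closure S).index ≠ 0) (j : ι) :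
    ∃ v ∈ S, v j ≠ 0 := by
  by_contra! h
  have hker : AddSubgroup.closure S ≤ (Pi.evalAddMonoidHom (fun _ => ℤ) j).ker :=
    (AddSubgroup.closure_le _).2 h
  obtain ⟨k, hk, -, hmem⟩ := AddSubgroup.exists_nsmul_mem_of_index_ne_zero hS (Pi.single j 1)
  exact hk.ne' (by simpa using hker hmem)

lemma Int.one_le_cast_sq_of_ne_zero {k : ℤ} (hk : k ≠ 0) : (1 : ℝ) ≤ (k : ℝ) ^ 2 := by
  exact_mod_cast (one_le_sq_iff_one_le_abs k).2 (Int.one_le_abs hk)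

section Mmat

variable {m : ℕ}

lemma Mmat_apply (i j : Fin (m + 1)) :
    Mmat (m + 1) i j = if j = Fin.last m then 1 / 2 else if i = j then 1 else 0 := by
  simp [Mmat, Fin.ext_iff]

lemma Mmat_mulVec_castSucc (x : Fin (m + 1) → ℝ) (i : Fin m) :
    (Mmat (m + 1) *ᵥ x) i.castSucc = x i.castSucc + x (Fin.last m) / 2 := by
  simp [mulVec, dotProduct, Mmat_apply, Fin.sum_univ_castSucc]
  ring

lemma Mmat_mulVec_last (x : Fin (m + 1) → ℝ) :
    (Mmat (m + 1) *ᵥ x) (Fin.last m) = x (Fin.last m) / 2 := by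
  simp [mulVec, dotProduct, Mmat_apply, Fin.sum_univ_castSucc, eq_comm (a := Fin.last m)]
  ring

variable {b : Fin (m + 1) → ℝ}

lemma latNorm_diagonal_mul_Mmat_sq (v : Fin (m + 1) → ℤ) :
    latNorm (diagonal b * Mmat (m + 1)) v ^ 2 =
      ∑ i : Fin m, (b i.castSucc * (v i.castSucc + v (Fin.last m) / 2 : ℝ)) ^ 2 +
        (b (Fin.last m) * (v (Fin.last m) / 2 : ℝ)) ^ 2 := by
  simp only [latNorm_sq, Fin.sum_univ_castSucc, ← mulVec_mulVec, mulVec_diagonal,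
    Mmat_mulVec_castSucc, Mmat_mulVec_last]

lemma syst_diagonal_mul_Mmat_le_castSucc (hb : ∀ i, 0 < b i) (i : Fin m) :
    syst (diagonal b * Mmat (m + 1)) ≤ b i.castSucc := by
  refine syst_le_of_latNorm_sq_le _ (v := Pi.single i.castSucc 1) ?_ (hb _).le ?_
  · simp
  · rw [latNorm_diagonal_mul_Mmat_sq, Fintype.sum_eq_single i]
    · simp
    · intro j hj
      simp [hj]

lemma syst_diagonal_mul_Mmat_le_last (hb : ∀ i, 0 < b i) :
    syst (diagonal b * Mmat (m + 1)) ≤ b (Fin.last m) := by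
  refine syst_le_of_latNorm_sq_le _ (v := Fin.lastCases 2 fun _ => -1) ?_ (hb _).le ?_
  · intro h
    simpa using congrFun h (Fin.last m)
  · simp [latNorm_diagonal_mul_Mmat_sq]

lemma le_latNorm_diagonal_mul_Mmat_of_even {v : Fin (m + 1) → ℤ} (hv : v (Fin.last m) ≠ 0)
    (heven : Even (v (Fin.last m))) :
    b (Fin.last m) ≤ latNorm (diagonal b * Mmat (m + 1)) v := by
  obtain ⟨k, hk⟩ := heven
  have hk0 : k ≠ 0 := by omega
  refine le_of_sq_le_sq ?_ (latNorm_nonneg _ v)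
  rw [latNorm_diagonal_mul_Mmat_sq]
  calc b (Fin.last m) ^ 2 ≤ (b (Fin.last m) * (v (Fin.last m) / 2 : ℝ)) ^ 2 := by
        rw [hk]; push_cast
        nlinarith [Int.one_le_cast_sq_of_ne_zero hk0, sq_nonneg (b (Fin.last m))]
    _ ≤ _ := le_add_of_nonneg_left (Finset.sum_nonneg fun _ _ => sq_nonneg _)

lemma sum_sq_half_le_latNorm_diagonal_mul_Mmat_sq {v : Fin (m + 1) → ℤ}
    (hodd : Odd (v (Fin.last m))) :
    ∑ i, (b i / 2) ^ 2 ≤ latNorm (diagonal b * Mmat (m + 1)) v ^ 2 := by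
  rw [latNorm_diagonal_mul_Mmat_sq, Fin.sum_univ_castSucc]
  gcongr ∑ i, ?_ + ?_ with i
  · have hne : 2 * v i.castSucc + v (Fin.last m) ≠ 0 := by
      intro h; rw [← Int.not_even_iff_odd] at hodd; exact hodd ⟨-v i.castSucc, by omega⟩
    have := Int.one_le_cast_sq_of_ne_zero hne
    push_cast at this
    nlinarith [sq_nonneg (b i.castSucc)]
  · have hne : v (Fin.last m) ≠ 0 := fun h => by simp [h] at hodd
    nlinarith [Int.one_le_cast_sq_of_ne_zero hne, sq_nonneg (b (Fin.last m))]

lemma syst_diagonal_mul_Mmat_lt_latNorm_of_odd (hm : 4 ≤ m)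
    (hb : ∀ i, 0 < b i) {v : Fin (m + 1) → ℤ} (hodd : Odd (v (Fin.last m))) :
    syst (diagonal b * Mmat (m + 1)) < latNorm (diagonal b * Mmat (m + 1)) v := by
  set s := syst (diagonal b * Mmat (m + 1))
  have hs := syst_nonneg (diagonal b * Mmat (m + 1))
  have hcount : (m : ℝ) * s ^ 2 ≤ ∑ i : Fin m, b i.castSucc ^ 2 := by
    simpa using Finset.card_nsmul_le_sum Finset.univ (fun i : Fin m => b i.castSucc ^ 2) (s ^ 2)
      fun i _ => pow_le_pow_left₀ hs (syst_diagonal_mul_Mmat_le_castSucc hb i) 2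
  have hlow := sum_sq_half_le_latNorm_diagonal_mul_Mmat_sq (b := b) hodd
  simp only [Fin.sum_univ_castSucc, div_pow, ← Finset.sum_div] at hlow
  have hm' : (4 : ℝ) ≤ m := by exact_mod_cast hm
  refine lt_of_pow_lt_pow_left₀ 2 (latNorm_nonneg _ v) ?_
  nlinarith [hb (Fin.last m), mul_le_mul_of_nonneg_right hm' (sq_nonneg s)]

theorem syst_diagonal_mul_Mmat (hm : 4 ≤ m) (hb : ∀ i, 0 < b i)
    (hfin : (AddSubgroup.closure {v : Fin (m + 1) → ℤ | v ≠ 0 ∧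
        latNorm (diagonal b * Mmat (m + 1)) v = syst (diagonal b * Mmat (m + 1))}).index ≠ 0) :
    syst (diagonal b * Mmat (m + 1)) = b (Fin.last m) := by
  obtain ⟨v, ⟨-, hv⟩, hlast⟩ :=
    AddSubgroup.exists_mem_apply_ne_zero_of_index_closure_ne_zero hfin (Fin.last m)
  refine (syst_diagonal_mul_Mmat_le_last hb).antisymm ?_
  rcases Int.even_or_odd (v (Fin.last m)) with heven | hodd
  · exact hv ▸ le_latNorm_diagonal_mul_Mmat_of_even hlast heven
  · exact absurd hv (syst_diagonal_mul_Mmat_lt_latNorm_of_odd hm hb hodd).ne'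

end Mmat

/-- For `n ≥ 5`, `A = 2^(1/n) • M` and `H` diagonal with positive entries: if the set of
shortest integer vectors of `H A` generates a finite-index subgroup of `ℤⁿ`, then
`syst (H A) = 2^(1/n) · aₙ`. -/
theorem syst_eq_of_wellRounded {n : ℕ} (hn : 5 ≤ n) (a : Fin n → ℝ) (ha : ∀ i, 0 < a i)
    (hfin : (AddSubgroup.closure
        {v : Fin n → ℤ | v ≠ 0 ∧
          latNorm (Matrix.diagonal a * Amat n) v =
            syst (Matrix.diagonal a * Amat n)}).index ≠ 0) :
    syst (Matrix.diagonal a * Amat n) =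
      (2 : ℝ) ^ ((1 : ℝ) / n) * a ⟨n - 1, by omega⟩ := by
  obtain ⟨m, rfl⟩ : ∃ m, n = m + 1 := ⟨n - 1, by omega⟩
  set c := (2 : ℝ) ^ ((1 : ℝ) / (m + 1 : ℕ))
  have hc : 0 < c := by positivity
  have hB : diagonal a * Amat (m + 1) = diagonal (c • a) * Mmat (m + 1) := by
    rw [Amat, diagonal_smul, Matrix.mul_smul, smul_mul]
  rw [hB] at hfin ⊢
  exact syst_diagonal_mul_Mmat (b := c • a) (by omega) (fun i => mul_pos hc (ha i)) hfin
end
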